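/- Let y_m > 0 and let f : ℝ → ℝ be continuous and strictly positive on [0, y_m]. Set F(y) = ∫₀^y f(s) ds and h(y) = F(y_m) − F(y). Then for every continuous σ : [0, y_m] → ℝ with σ(s) ≥ 0 for all s, such that s ↦ √((σ(s)+1)/h(s)) and s ↦ σ(s)√((σ(s)+1)/h(s)) are integrable on (0, y_m), one has 2·(∫₀^{y_m} (1 − 2σ(s))·√((σ(s)+1)/h(s)) ds) / (∫₀^{y_m} √((σ(s)+1)/h(s)) ds)³ ≤ 2·(∫₀^{y_m} h(s)^{-1/2} ds)^{-2}, with equality when σ ≡ 0. -/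

import Mathlib

open MeasureTheory intervalIntegral Set

/-!
With `w = √((σ + 1) / h)` one has, pointwise, `(1 - 2σ) w ≤ h^{-1/2} ≤ w`: the right
inequality because `σ ≥ 0`, the left one because `(1 - 2t)√(1 + t) ≤ 1` for `t ≥ 0`.
Integrating gives `N ≤ I ≤ A` for the numerator integral `N`, `I = ∫ h^{-1/2}` and the
denominator integral `A`, and `I > 0` since `h > 0` on `[0, y_m)`. Hence
`2N / A³ ≤ 2I / I³ = 2 / I²`, with equality for `σ ≡ 0`, where `N = I = A`.
-/

namespace Real

/-- Holds for every real `x`: for `x < 0` both sides vanish. -/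
lemma sqrt_inv_eq_rpow_neg_half (x : ℝ) : √x⁻¹ = x ^ (-(1 / 2) : ℝ) := by
  rcases le_or_gt 0 x with hx | hx
  · rw [rpow_neg hx, ← sqrt_eq_rpow, sqrt_inv]
  · rw [sqrt_eq_zero_of_nonpos (inv_nonpos.2 hx.le), rpow_def_of_neg hx,
      show (-(1 / 2) * π : ℝ) = -(π / 2) by ring, cos_neg, cos_pi_div_two, mul_zero]

lemma one_sub_two_mul_mul_sqrt_add_one_le_one {t : ℝ} (ht : 0 ≤ t) :
    (1 - 2 * t) * √(t + 1) ≤ 1 := by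
  have hsq := sq_sqrt (by linarith : (0 : ℝ) ≤ t + 1)
  have hone : 1 ≤ √(t + 1) := by nlinarith [sqrt_nonneg (t + 1)]
  nlinarith [sq_nonneg (√(t + 1) - 1)]

lemma one_sub_two_mul_mul_sqrt_add_one_div_le_sqrt_inv {t : ℝ} (ht : 0 ≤ t) (x : ℝ) :
    (1 - 2 * t) * √((t + 1) / x) ≤ √x⁻¹ := by
  rw [div_eq_mul_inv, sqrt_mul (by linarith), ← mul_assoc]
  calc (1 - 2 * t) * √(t + 1) * √x⁻¹ ≤ 1 * √x⁻¹ :=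
        mul_le_mul_of_nonneg_right (one_sub_two_mul_mul_sqrt_add_one_le_one ht) (sqrt_nonneg _)
    _ = √x⁻¹ := one_mul _

lemma sqrt_inv_le_sqrt_add_one_div {t : ℝ} (ht : 0 ≤ t) (x : ℝ) :
    √x⁻¹ ≤ √((t + 1) / x) := by
  rcases le_or_gt 0 x with hx | hx
  · rw [div_eq_mul_inv]
    exact sqrt_le_sqrt (le_mul_of_one_le_left (by positivity) (by linarith))
  · rw [sqrt_eq_zero_of_nonpos (inv_nonpos.2 hx.le)]
    exact sqrt_nonneg _

end Real

lemma integral_sub_integral_pos {f : ℝ → ℝ} {a b x : ℝ} (hf_cont : ContinuousOn f (Icc a b))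
    (hf_pos : ∀ y ∈ Icc a b, 0 < f y) (hx : x ∈ Ico a b) :
    0 < (∫ s in a..b, f s) - ∫ s in a..x, f s := by
  have hab : a ≤ b := hx.1.trans hx.2.le
  have hint : ∀ {c d}, Icc c d ⊆ Icc a b → c ≤ d → IntervalIntegrable f volume c d :=
    fun hsub hcd => (hf_cont.mono (by rwa [uIcc_of_le hcd])).intervalIntegrable
  rw [integral_interval_sub_left (hint le_rfl hab) (hint (Icc_subset_Icc_right hx.2.le) hx.1)]
  exact intervalIntegral_pos_of_pos_on (hint (Icc_subset_Icc_left hx.1) hx.2.le)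
    (fun y hy => hf_pos y ⟨hx.1.trans hy.1.le, hy.2.le⟩) hx.2

lemma continuousOn_integral_sub_integral {f : ℝ → ℝ} {a b : ℝ} (hab : a ≤ b)
    (hf_cont : ContinuousOn f (Icc a b)) :
    ContinuousOn (fun x => (∫ s in a..b, f s) - ∫ s in a..x, f s) (Icc a b) := by
  have hprim := continuousOn_primitive_interval (μ := volume) (f := f) (a := a) (b := b)
    (by rw [uIcc_of_le hab]; exact hf_cont.integrableOn_Icc)
  rw [uIcc_of_le hab] at hprim
  exact continuousOn_const.sub hprim

lemma intervalIntegrable_rpow_neg_half {h σ : ℝ → ℝ} {a b : ℝ} (hab : a ≤ b)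
    (hh_cont : ContinuousOn h (Icc a b)) (hσ_nonneg : ∀ s ∈ Icc a b, 0 ≤ σ s)
    (hint : IntervalIntegrable (fun s => √((σ s + 1) / h s)) volume a b) :
    IntervalIntegrable (fun s => h s ^ (-(1 / 2) : ℝ)) volume a b := by
  refine hint.mono_fun' ?_ ?_
  · rw [uIoc_of_le hab]
    exact ((hh_cont.aestronglyMeasurable measurableSet_Icc).aemeasurable.pow_const _
      |>.aestronglyMeasurable).mono_measure (Measure.restrict_mono Ioc_subset_Icc_self le_rfl)
  · filter_upwards [ae_restrict_mem measurableSet_uIoc] with x hx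
    rw [uIoc_of_le hab] at hx
    rw [← Real.sqrt_inv_eq_rpow_neg_half, Real.norm_of_nonneg (Real.sqrt_nonneg _)]
    exact Real.sqrt_inv_le_sqrt_add_one_div (hσ_nonneg x (Ioc_subset_Icc_self hx)) _

lemma two_mul_div_pow_three_self {I : ℝ} (hI : I ≠ 0) : 2 * I / I ^ 3 = 2 * (I ^ 2)⁻¹ := by
  field_simp

lemma two_mul_div_pow_three_le {N I A : ℝ} (hNI : N ≤ I) (hIA : I ≤ A) (hI : 0 < I) :
    2 * N / A ^ 3 ≤ 2 * (I ^ 2)⁻¹ := by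
  rw [← two_mul_div_pow_three_self hI.ne', mul_div_assoc, mul_div_assoc]
  gcongr 2 * ?_
  exact div_le_div₀ hI.le hNI (by positivity) (by gcongr)

theorem stmt_9_general (y_m : ℝ) (hym : 0 < y_m) (f : ℝ → ℝ)
    (hf_cont : ContinuousOn f (Set.Icc 0 y_m))
    (hf_pos : ∀ y ∈ Set.Icc 0 y_m, 0 < f y)
    (F h : ℝ → ℝ)
    (hF : ∀ y, F y = ∫ s in (0:ℝ)..y, f s)
    (hh : ∀ y, h y = F y_m - F y)
    (σ : ℝ → ℝ)
    (hσ_nonneg : ∀ s ∈ Set.Icc 0 y_m, 0 ≤ σ s)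
    (hint1 : IntervalIntegrable (fun s => Real.sqrt ((σ s + 1) / h s)) volume 0 y_m)
    (hint2 : IntervalIntegrable (fun s => σ s * Real.sqrt ((σ s + 1) / h s)) volume 0 y_m) :
    2 * (∫ s in (0:ℝ)..y_m, (1 - 2 * σ s) * Real.sqrt ((σ s + 1) / h s))
        / (∫ s in (0:ℝ)..y_m, Real.sqrt ((σ s + 1) / h s)) ^ 3
      ≤ 2 * ((∫ s in (0:ℝ)..y_m, (h s) ^ (-(1/2) : ℝ)) ^ 2)⁻¹ ∧
    2 * (∫ s in (0:ℝ)..y_m, (1 - 2 * (0:ℝ)) * Real.sqrt (((0:ℝ) + 1) / h s))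
        / (∫ s in (0:ℝ)..y_m, Real.sqrt (((0:ℝ) + 1) / h s)) ^ 3
      = 2 * ((∫ s in (0:ℝ)..y_m, (h s) ^ (-(1/2) : ℝ)) ^ 2)⁻¹ := by
  have hh_eq : h = fun y => (∫ s in (0:ℝ)..y_m, f s) - ∫ s in (0:ℝ)..y, f s := by
    ext y; rw [hh, hF, hF]
  have hh_pos : ∀ x ∈ Ico 0 y_m, 0 < h x := fun x hx => by
    rw [hh_eq]; exact integral_sub_integral_pos hf_cont hf_pos hx
  have hI_int : IntervalIntegrable (fun s => h s ^ (-(1 / 2) : ℝ)) volume 0 y_m :=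
    intervalIntegrable_rpow_neg_half hym.le
      (by rw [hh_eq]; exact continuousOn_integral_sub_integral hym.le hf_cont) hσ_nonneg hint1
  have hN_int :
      IntervalIntegrable (fun s => (1 - 2 * σ s) * √((σ s + 1) / h s)) volume 0 y_m := by
    simpa only [sub_mul, one_mul, mul_assoc] using hint1.sub (hint2.const_mul 2)
  have hI_pos : 0 < ∫ s in (0:ℝ)..y_m, h s ^ (-(1 / 2) : ℝ) :=
    intervalIntegral_pos_of_pos_on hI_int
      (fun x hx => Real.rpow_pos_of_pos (hh_pos x ⟨hx.1.le, hx.2⟩) _) hym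
  refine ⟨two_mul_div_pow_three_le ?_ ?_ hI_pos, ?_⟩
  · refine integral_mono_on hym.le hN_int hI_int fun x hx => ?_
    rw [← Real.sqrt_inv_eq_rpow_neg_half]
    exact Real.one_sub_two_mul_mul_sqrt_add_one_div_le_sqrt_inv (hσ_nonneg x hx) _
  · refine integral_mono_on hym.le hI_int hint1 fun x hx => ?_
    rw [← Real.sqrt_inv_eq_rpow_neg_half]
    exact Real.sqrt_inv_le_sqrt_add_one_div (hσ_nonneg x hx) _
  · simp only [mul_zero, sub_zero, zero_add, one_mul, one_div (h _),
      Real.sqrt_inv_eq_rpow_neg_half]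
    exact two_mul_div_pow_three_self hI_pos.ne'

/-- Theorem 2 (dual variational principle): for every admissible `σ ≥ 0`,
`2 ∫₀^{y_m}(1−2σ)√((σ+1)/h) / (∫₀^{y_m} √((σ+1)/h))³ ≤ 1/λ`, with
`1/λ = 2(∫₀^{y_m} h^{-1/2})^{-2}`, and equality holds when `σ ≡ 0`. -/
theorem stmt_9 (y_m : ℝ) (hym : 0 < y_m) (f : ℝ → ℝ)
    (hf_cont : ContinuousOn f (Set.Icc 0 y_m))
    (hf_pos : ∀ y ∈ Set.Icc 0 y_m, 0 < f y)
    (F h : ℝ → ℝ)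
    (hF : ∀ y, F y = ∫ s in (0:ℝ)..y, f s)
    (hh : ∀ y, h y = F y_m - F y)
    (σ : ℝ → ℝ)
    (hσ_cont : ContinuousOn σ (Set.Icc 0 y_m))
    (hσ_nonneg : ∀ s ∈ Set.Icc 0 y_m, 0 ≤ σ s)
    (hint1 : IntervalIntegrable (fun s => Real.sqrt ((σ s + 1) / h s)) volume 0 y_m)
    (hint2 : IntervalIntegrable (fun s => σ s * Real.sqrt ((σ s + 1) / h s)) volume 0 y_m) :
    2 * (∫ s in (0:ℝ)..y_m, (1 - 2 * σ s) * Real.sqrt ((σ s + 1) / h s))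
        / (∫ s in (0:ℝ)..y_m, Real.sqrt ((σ s + 1) / h s)) ^ 3
      ≤ 2 * ((∫ s in (0:ℝ)..y_m, (h s) ^ (-(1/2) : ℝ)) ^ 2)⁻¹ ∧
    2 * (∫ s in (0:ℝ)..y_m, (1 - 2 * (0:ℝ)) * Real.sqrt (((0:ℝ) + 1) / h s))
        / (∫ s in (0:ℝ)..y_m, Real.sqrt (((0:ℝ) + 1) / h s)) ^ 3
      = 2 * ((∫ s in (0:ℝ)..y_m, (h s) ^ (-(1/2) : ℝ)) ^ 2)⁻¹ :=
  stmt_9_general y_m hym f hf_cont hf_pos F h hF hh σ hσ_nonneg hint1 hint2
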